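/- arXiv:2204.09799 — 4 statements merged into one kernel-verified Lean document; each statement's English description precedes it below -/
import Mathlib

section
/- Let u be a C¹ vector field on a neighborhood of the boundary of a smooth domain Ω ⊂ ℝ³ with unit normal n and tangential projection Π = Id − n⊗n. Then the tangential part of the normal derivative satisfies Π(∂ₙ u) = Π(curl u × n) + Π ∇(u·n) − Π((D n) u), where [(D n)u]_i = Σ_k ∂_i n_k u_k. -/
noncomputable section

/-- ℝ³ modelled as `Fin 3 → ℝ`. -/
abbrev E3 : Type := Fin 3 → ℝ

/-- `i`-th partial derivative of a scalar function on ℝ³. -/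
def pd (i : Fin 3) (g : E3 → ℝ) (x : E3) : ℝ :=
  fderiv ℝ g x (Pi.single i 1)

/-- Gradient. -/
def grad (f : E3 → ℝ) (x : E3) : E3 := fun i => pd i f x

/-- Dot product in ℝ³. -/
def dot (a b : E3) : ℝ := ∑ i, a i * b i

/-- Cross product in ℝ³. -/
def cross (a b : E3) : E3 :=
  ![a 1 * b 2 - a 2 * b 1, a 2 * b 0 - a 0 * b 2, a 0 * b 1 - a 1 * b 0]

/-- Curl of a vector field on ℝ³. -/
def curl (u : E3 → E3) (x : E3) : E3 :=
  ![pd 1 (fun y => u y 2) x - pd 2 (fun y => u y 1) x,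
    pd 2 (fun y => u y 0) x - pd 0 (fun y => u y 2) x,
    pd 0 (fun y => u y 1) x - pd 1 (fun y => u y 0) x]

/-- Directional derivative of a vector field in direction `v`. -/
def ddir (v : E3) (u : E3 → E3) (x : E3) : E3 := fun i => fderiv ℝ (fun y => u y i) x v

/-- Tangential projection `Π v = v − (v·n) n`. -/
def tproj (n v : E3) : E3 := v - (dot v n) • n

/-!
Before projecting, the identity is exact: the ε–δ identity gives `curl u × n = ∂ₙ u − (∇u)ᵀ n`,
and the product rule gives `∇(u·n) = (∇u)ᵀ n + (D n) u`. Since `Π` is linear, projecting the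
exact identity gives the tangential one.
-/

lemma tproj_add (n a b : E3) : tproj n (a + b) = tproj n a + tproj n b := by
  funext i
  simp only [tproj, dot, Pi.add_apply, Pi.sub_apply, Pi.smul_apply, smul_eq_mul, add_mul,
    Finset.sum_add_distrib]
  ring

lemma tproj_sub (n a b : E3) : tproj n (a - b) = tproj n a - tproj n b := by
  funext i
  simp only [tproj, dot, Pi.sub_apply, Pi.smul_apply, smul_eq_mul, sub_mul,
    Finset.sum_sub_distrib]
  ring

lemma ddir_apply_eq_sum (v : E3) (u : E3 → E3) (x : E3) (i : Fin 3) :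
    ddir v u x i = ∑ k, v k * pd k (fun y => u y i) x := by
  have single_eq : ∀ k : Fin 3, (Pi.single k 1 : E3) = fun j => if k = j then 1 else 0 :=
    fun k => funext fun j => by simp [Pi.single_apply, eq_comm]
  simp only [ddir, pd, single_eq]
  exact (fderiv ℝ (fun y => u y i) x).toLinearMap.pi_apply_eq_sum_univ v

lemma cross_curl_apply (u : E3 → E3) (x a : E3) (i : Fin 3) :
    cross (curl u x) a i = ∑ k, a k * (pd k (fun y => u y i) x - pd i (fun y => u y k) x) := by
  fin_cases i <;>
    simp only [cross, curl, Fin.sum_univ_three, Fin.zero_eta, Fin.mk_one, Fin.reduceFinMk,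
      Matrix.cons_val_zero, Matrix.cons_val_one, Matrix.cons_val] <;>
    ring

lemma pd_dot {u n : E3 → E3} {x : E3} (hu : ∀ k, DifferentiableAt ℝ (fun y => u y k) x)
    (hn : ∀ k, DifferentiableAt ℝ (fun y => n y k) x) (i : Fin 3) :
    pd i (fun y => dot (u y) (n y)) x
      = ∑ k, (pd i (fun y => u y k) x * n x k + u x k * pd i (fun y => n y k) x) := by
  simp only [pd, dot]
  rw [fderiv_fun_sum (A := fun k y => u y k * n y k) fun k _ => (hu k).mul (hn k)]
  simp only [sum_apply, fderiv_fun_mul (hu _) (hn _), add_apply, smul_apply, smul_eq_mul]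
  exact Finset.sum_congr rfl fun k _ => by ring

theorem ddir_eq_cross_curl_add_grad_dot_sub {u n : E3 → E3} {x : E3}
    (hu : ∀ k, DifferentiableAt ℝ (fun y => u y k) x)
    (hn : ∀ k, DifferentiableAt ℝ (fun y => n y k) x) :
    ddir (n x) u x = cross (curl u x) (n x) + grad (fun y => dot (u y) (n y)) x
      - fun i => ∑ k, pd i (fun y => n y k) x * u x k := by
  funext i
  simp only [Pi.add_apply, Pi.sub_apply, grad, ddir_apply_eq_sum, cross_curl_apply, pd_dot hu hn,
    Fin.sum_univ_three]
  ring

theorem tangential_part_of_normal_derivative_general (Ω : Set E3) (n u : E3 → E3)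
    (hn : ∀ x ∈ frontier Ω, ∀ i, DifferentiableAt ℝ (fun y => n y i) x)
    (hu : ∀ x ∈ frontier Ω, ∀ i, DifferentiableAt ℝ (fun y => u y i) x) :
    ∀ x ∈ frontier Ω,
      tproj (n x) (ddir (n x) u x)
        = tproj (n x) (cross (curl u x) (n x))
            + tproj (n x) (grad (fun y => dot (u y) (n y)) x)
            - tproj (n x) (fun i => ∑ k, pd i (fun y => n y k) x * u x k) := by
  intro x hx
  rw [← tproj_add, ← tproj_sub, ddir_eq_cross_curl_add_grad_dot_sub (hu x hx) (hn x hx)]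

/-- For a `C¹` vector field `u` near the boundary of `Ω ⊆ ℝ³`, with `n` the (unit) normal
extension and `Π = Id − n ⊗ n`,
`Π(∂ₙ u) = Π(curl u × n) + Π ∇(u·n) − Π((D n) u)`, where `[(Dn)u]_i = Σ_k ∂_i n_k u_k`. -/
theorem tangential_part_of_normal_derivative (Ω : Set E3) (n u : E3 → E3)
    (hn1 : ∀ x ∈ frontier Ω, dot (n x) (n x) = 1)
    (hn : ∀ x ∈ frontier Ω, ∀ i, DifferentiableAt ℝ (fun y => n y i) x)
    (hu : ∀ x ∈ frontier Ω, ∀ i, DifferentiableAt ℝ (fun y => u y i) x) :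
    ∀ x ∈ frontier Ω,
      tproj (n x) (ddir (n x) u x)
        = tproj (n x) (cross (curl u x) (n x))
            + tproj (n x) (grad (fun y => dot (u y) (n y)) x)
            - tproj (n x) (fun i => ∑ k, pd i (fun y => n y k) x * u x k) :=
  tangential_part_of_normal_derivative_general Ω n u hn hu
end
end

section
/- Commutator estimate in conormal Sobolev spaces: for a multi-index I with |I| = k ≥ 2, ‖[Z^I, f] g(t)‖_{L²} ≲ ‖Z f(t)‖_{H^{k−1}_co} · |||g|||_{[k/2]−1,∞,t} + ‖g(t)‖_{H^{k−1}_co} · |||Z f|||_{[(k−1)/2],∞,t}, where [Z^I, f]g = Z^I(fg) − f Z^I g. -/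
open MeasureTheory
open scoped ENNReal ContDiff

noncomputable section

/-- The ambient space ℝ³. -/
abbrev E : Type := Fin 3 → ℝ

/-- The first-order derivation along the (conormal) vector field `W j`. -/
def Zop {M : ℕ} (W : Fin M → E → E) (j : Fin M) (h : E → ℝ) : E → ℝ :=
  fun x => fderiv ℝ h x (W j x)

/-- Iterated conormal derivative `Z^I`. -/
def ZIter {M : ℕ} (W : Fin M → E → E) : List (Fin M) → (E → ℝ) → E → ℝ
  | [], h => h
  | j :: L, h => Zop W j (ZIter W L h)

/-- Conormal Sobolev norm `‖h‖_{H^k_co} = Σ_{|I| ≤ k} ‖Z^I h‖_{L²(Ω)}`. -/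
def HcoN {M : ℕ} (Ω : Set E) (W : Fin M → E → E) (k : ℕ) (h : E → ℝ) : ℝ≥0∞ :=
  ∑ l ∈ Finset.range (k + 1), ∑ J : Fin l → Fin M,
    eLpNorm (ZIter W (List.ofFn J) h) 2 (volume.restrict Ω)

/-- Conormal `L^∞` norm `|||g|||_{m,∞,t} = Σ_{|I| ≤ m} ‖Z^I g‖_{L^∞([0,t]×Ω)}`. -/
def LinfN {M : ℕ} (Ω : Set E) (W : Fin M → E → E) (m : ℕ) (t : ℝ) (g : ℝ → E → ℝ) :
    ℝ≥0∞ :=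
  ∑ l ∈ Finset.range (m + 1), ∑ J : Fin l → Fin M,
    ⨆ s ∈ Set.Icc (0 : ℝ) t, ⨆ x ∈ Ω, (‖ZIter W (List.ofFn J) (g s) x‖₊ : ℝ≥0∞)

/-!
Applying the Leibniz rule `|I|` times writes `[Z^I, f] g` as a sum of fewer than `2^|I|`
products `Z^A f · Z^B g` over complementary subwords `A ≠ []`, `B` of `I`. Writing
`Z^A f = Z^{A'} (Z_j f)` with `|A'| + |B| = k - 1`, either `|B| ≤ [k/2] - 1`, and the product
is bounded by the `L^∞` norm of `Z^B g` times the `L²` norm of `Z^{A'} (Z_j f)`, or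
`|B| ≥ [k/2]`, so that `|A'| ≤ [(k-1)/2]` and the roles of `L^∞` and `L²` are exchanged.
-/

lemma hasFDerivAt_list_sum {𝕜 G H ι : Type*} [NontriviallyNormedField 𝕜] [NormedAddCommGroup G]
    [NormedSpace 𝕜 G] [NormedAddCommGroup H] [NormedSpace 𝕜 H] {x : G} (l : List ι)
    {u : ι → G → H} {u' : ι → G →L[𝕜] H} (hu : ∀ i ∈ l, HasFDerivAt (u i) (u' i) x) :
    HasFDerivAt (fun y => (l.map fun i => u i y).sum) (l.map u').sum x := by
  induction l with
  | nil => exact hasFDerivAt_const 0 x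
  | cons i l ih =>
    simp only [List.map_cons, List.sum_cons]
    exact (hu i List.mem_cons_self).add (ih fun j hj => hu j (List.mem_cons_of_mem i hj))

section Lebesgue

variable {α F : Type*} [MeasurableSpace α] [NormedAddCommGroup F] {μ : Measure α}

lemma eLpNorm_top_restrict_le_iSup [TopologicalSpace α] [OpensMeasurableSpace α] {s : Set α}
    {v : α → F} (hv : Continuous v) :
    eLpNorm v ∞ (μ.restrict s) ≤ ⨆ x ∈ s, (‖v x‖₊ : ℝ≥0∞) := by
  set B := ⨆ x ∈ s, (‖v x‖₊ : ℝ≥0∞)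
  have hclosed : IsClosed {x | (‖v x‖₊ : ℝ≥0∞) ≤ B} := isClosed_le (by fun_prop) continuous_const
  have hsub : s ⊆ {x | (‖v x‖₊ : ℝ≥0∞) ≤ B} := fun x hx =>
    le_iSup₂ (f := fun x (_ : x ∈ s) => (‖v x‖₊ : ℝ≥0∞)) x hx
  -- `s` need not be measurable, so the bound is transported from its closed superset
  rw [eLpNorm_exponent_top]
  exact eLpNormEssSup_le_of_ae_enorm_bound <| ae_restrict_of_ae_restrict_of_subset hsub <|
    ae_restrict_of_forall_mem hclosed.measurableSet fun _ hx => hx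

lemma eLpNorm_list_sum_le {ι : Type*} {p : ℝ≥0∞} (hp : 1 ≤ p) (l : List ι) (u : ι → α → F)
    (hu : ∀ i ∈ l, AEStronglyMeasurable (u i) μ) :
    eLpNorm (fun x => (l.map fun i => u i x).sum) p μ ≤ (l.map fun i => eLpNorm (u i) p μ).sum := by
  induction l with
  | nil => simp
  | cons i l ih =>
    have hl : ∀ j ∈ l, AEStronglyMeasurable (u j) μ := fun j hj => hu j (List.mem_cons_of_mem i hj)
    have hsum : AEStronglyMeasurable (fun x => (l.map fun j => u j x).sum) μ := by
      simpa [Function.comp_def] using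
        (List.aestronglyMeasurable_fun_sum (l.map u) (by simpa using hl))
    simp only [List.map_cons, List.sum_cons]
    exact (eLpNorm_add_le (hu i List.mem_cons_self) hsum hp).trans (add_le_add le_rfl (ih hl))

end Lebesgue

lemma apply_get_le_sum_range_sum {β R : Type*} [Fintype β] [AddCommMonoid R] [PartialOrder R]
    [IsOrderedAddMonoid R] [CanonicallyOrderedAdd R] (F : ∀ l, (Fin l → β) → R) {m : ℕ}
    (A : List β) (hA : A.length ≤ m) :
    F A.length A.get ≤ ∑ l ∈ Finset.range (m + 1), ∑ J : Fin l → β, F l J :=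
  (Finset.single_le_sum (fun _ _ => zero_le) (Finset.mem_univ A.get)).trans <|
    Finset.single_le_sum (f := fun l => ∑ J : Fin l → β, F l J) (fun _ _ => zero_le)
      (Finset.mem_range_succ_iff.mpr hA)

section Conormal

variable {M : ℕ} {W : Fin M → E → E}

lemma contDiff_zop (hW : ∀ j, ContDiff ℝ ∞ (W j)) {h : E → ℝ} (hh : ContDiff ℝ ∞ h)
    (j : Fin M) : ContDiff ℝ ∞ (Zop W j h) :=
  (hh.fderiv_right (by simp)).clm_apply (hW j)

lemma contDiff_ziter (hW : ∀ j, ContDiff ℝ ∞ (W j)) {h : E → ℝ} (hh : ContDiff ℝ ∞ h) :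
    ∀ L : List (Fin M), ContDiff ℝ ∞ (ZIter W L h)
  | [] => hh
  | j :: L => contDiff_zop hW (contDiff_ziter hW hh L) j

lemma ziter_concat (A : List (Fin M)) (j : Fin M) (h : E → ℝ) :
    ZIter W (A ++ [j]) h = ZIter W A (Zop W j h) := by
  induction A with
  | nil => rfl
  | cons j A ih => exact congrArg (Zop W j) ih

lemma zop_add (j : Fin M) {u v : E → ℝ} (hu : Differentiable ℝ u) (hv : Differentiable ℝ v)
    (x : E) : Zop W j (fun y => u y + v y) x = Zop W j u x + Zop W j v x := by
  simp only [Zop, fderiv_fun_add (hu x) (hv x), add_apply]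

lemma zop_mul (j : Fin M) {u v : E → ℝ} (hu : Differentiable ℝ u) (hv : Differentiable ℝ v)
    (x : E) : Zop W j (fun y => u y * v y) x = Zop W j u x * v x + u x * Zop W j v x := by
  simp only [Zop, fderiv_fun_mul (hu x) (hv x), add_apply, smul_apply, smul_eq_mul]
  ring

lemma zop_list_sum {ι : Type*} (j : Fin M) (l : List ι) {u : ι → E → ℝ}
    (hu : ∀ i ∈ l, Differentiable ℝ (u i)) (x : E) :
    Zop W j (fun y => (l.map fun i => u i y).sum) x = (l.map fun i => Zop W j (u i) x).sum := by
  simp only [Zop, (hasFDerivAt_list_sum l fun i hi => (hu i hi x).hasFDerivAt).fderiv]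
  induction l with
  | nil => simp
  | cons i l ih =>
    simp only [List.map_cons, List.sum_cons, add_apply]
    rw [ih fun k hk => hu k (List.mem_cons_of_mem i hk)]

/-- The pairs of complementary subwords `(A, B)` of `L` with `A ≠ []`: the terms of the Leibniz
expansion of `[Z^L, f] g`. -/
def leibnizSplits : List (Fin M) → List (List (Fin M) × List (Fin M))
  | [] => []
  | j :: L =>
      ([j], L) :: ((leibnizSplits L).map (fun p => (j :: p.1, p.2))
        ++ (leibnizSplits L).map fun p => (p.1, j :: p.2))

lemma length_leibnizSplits : ∀ L : List (Fin M), (leibnizSplits L).length + 1 = 2 ^ L.length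
  | [] => rfl
  | j :: L => by
    have := length_leibnizSplits L
    simp only [leibnizSplits, List.length_cons, List.length_append, List.length_map, pow_succ]
    omega

lemma ne_nil_and_length_add_of_mem_leibnizSplits {L : List (Fin M)}
    {p : List (Fin M) × List (Fin M)} (hp : p ∈ leibnizSplits L) :
    p.1 ≠ [] ∧ p.1.length + p.2.length = L.length := by
  induction L generalizing p with
  | nil => simp [leibnizSplits] at hp
  | cons j L ih =>
    simp only [leibnizSplits, List.mem_cons, List.mem_append, List.mem_map] at hp
    rcases hp with rfl | ⟨q, hq, rfl⟩ | ⟨q, hq, rfl⟩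
    · simp [Nat.add_comm]
    all_goals
      obtain ⟨hq₁, hq₂⟩ := ih hq
      simp only [List.length_cons]
      exact ⟨by simp [hq₁], by omega⟩

lemma ziter_mul (hW : ∀ j, ContDiff ℝ ∞ (W j)) {f g : E → ℝ} (hf : ContDiff ℝ ∞ f)
    (hg : ContDiff ℝ ∞ g) (L : List (Fin M)) (x : E) :
    ZIter W L (fun y => f y * g y) x = f x * ZIter W L g x
      + ((leibnizSplits L).map fun p => ZIter W p.1 f x * ZIter W p.2 g x).sum := by
  have hd : ∀ A : List (Fin M), ∀ h : E → ℝ, ContDiff ℝ ∞ h → Differentiable ℝ (ZIter W A h) :=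
    fun A h hh => (contDiff_ziter hW hh A).differentiable (by simp)
  have hprod : ∀ p : List (Fin M) × List (Fin M),
      Differentiable ℝ fun y => ZIter W p.1 f y * ZIter W p.2 g y := fun p =>
    (hd p.1 f hf).mul (hd p.2 g hg)
  induction L generalizing x with
  | nil => simp [ZIter, leibnizSplits]
  | cons j L ih =>
    have hmul : ∀ p : List (Fin M) × List (Fin M),
        Zop W j (fun y => ZIter W p.1 f y * ZIter W p.2 g y) x
          = Zop W j (ZIter W p.1 f) x * ZIter W p.2 g x
            + ZIter W p.1 f x * Zop W j (ZIter W p.2 g) x := fun p =>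
      zop_mul j (hd p.1 f hf) (hd p.2 g hg) x
    have hsplit := congrArg (Zop W j · x) (funext ih)
    have hf' : Differentiable ℝ f := hf.differentiable (by simp)
    rw [zop_add (u := fun y => f y * ZIter W L g y) j (hf'.mul (hd L g hg))
        (fun y => (hasFDerivAt_list_sum _ fun p _ => (hprod p y).hasFDerivAt).differentiableAt),
      zop_mul j hf' (hd L g hg), zop_list_sum j _ fun p _ => hprod p] at hsplit
    change Zop W j (ZIter W L _) x = _
    simp only [hsplit, hmul, leibnizSplits, List.map_cons, List.map_append, List.map_map,
      List.sum_cons, List.sum_append, List.sum_map_add, Function.comp_def, ZIter]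
    ring

lemma eLpNorm_ziter_le_HcoN (Ω : Set E) {m : ℕ} (h : E → ℝ) {A : List (Fin M)}
    (hA : A.length ≤ m) : eLpNorm (ZIter W A h) 2 (volume.restrict Ω) ≤ HcoN Ω W m h := by
  simpa only [HcoN, List.ofFn_get] using
    apply_get_le_sum_range_sum (fun l (J : Fin l → Fin M) => eLpNorm (ZIter W (List.ofFn J) h) 2
      (volume.restrict Ω)) A hA

lemma iSup_nnnorm_ziter_le_LinfN (Ω : Set E) {m : ℕ} {t : ℝ} (ht : 0 ≤ t) (g : ℝ → E → ℝ)
    {B : List (Fin M)} (hB : B.length ≤ m) :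
    ⨆ x ∈ Ω, (‖ZIter W B (g t) x‖₊ : ℝ≥0∞) ≤ LinfN Ω W m t g := by
  have hsum := apply_get_le_sum_range_sum (fun l (J : Fin l → Fin M) =>
    ⨆ s ∈ Set.Icc (0 : ℝ) t, ⨆ x ∈ Ω, (‖ZIter W (List.ofFn J) (g s) x‖₊ : ℝ≥0∞)) B hB
  rw [List.ofFn_get] at hsum
  exact (le_biSup (fun s => ⨆ x ∈ Ω, (‖ZIter W B (g s) x‖₊ : ℝ≥0∞))
    (Set.right_mem_Icc.mpr ht)).trans hsum

lemma eLpNorm_ziter_mul_ziter_le (Ω : Set E) (hW : ∀ j, ContDiff ℝ ∞ (W j))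
    {f g : ℝ → E → ℝ} {t : ℝ} (hf : ContDiff ℝ ∞ (f t)) (hg : ContDiff ℝ ∞ (g t)) (ht : 0 ≤ t)
    {k : ℕ} {A B : List (Fin M)} (hA : A ≠ []) (hAB : A.length + B.length = k) :
    eLpNorm (fun x => ZIter W A (f t) x * ZIter W B (g t) x) 2 (volume.restrict Ω)
      ≤ (∑ j : Fin M, HcoN Ω W (k - 1) (Zop W j (f t))) * LinfN Ω W (k / 2 - 1) t g
        + HcoN Ω W (k - 1) (g t)
          * ∑ j : Fin M, LinfN Ω W ((k - 1) / 2) t fun s => Zop W j (f s) := by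
  obtain ⟨A, j, rfl⟩ : ∃ A' j, A = A' ++ [j] := by
    simpa using (List.eq_nil_or_concat A).resolve_left hA
  rw [ziter_concat]
  rw [List.length_append, List.length_singleton] at hAB
  set u := ZIter W A (Zop W j (f t))
  set v := ZIter W B (g t)
  have hu : Continuous u := (contDiff_ziter hW (contDiff_zop hW hf j) A).continuous
  have hv : Continuous v := (contDiff_ziter hW hg B).continuous
  have hmul : ∀ x, ‖u x * v x‖₊ ≤ (1 : NNReal) * ‖u x‖₊ * ‖v x‖₊ := fun x => by
    rw [one_mul, nnnorm_mul]
  by_cases hB : B.length ≤ k / 2 - 1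
  · calc _ ≤ eLpNorm u 2 (volume.restrict Ω) * eLpNorm v ∞ (volume.restrict Ω) := by
          simpa using eLpNorm_le_eLpNorm_mul_eLpNorm_top 2 hu.aestronglyMeasurable v (· * ·) 1
            (.of_forall hmul)
      _ ≤ (∑ j : Fin M, HcoN Ω W (k - 1) (Zop W j (f t))) * LinfN Ω W (k / 2 - 1) t g := by
          gcongr
          · exact (eLpNorm_ziter_le_HcoN Ω _ (by omega)).trans
              (Finset.single_le_sum (f := fun i => HcoN Ω W (k - 1) (Zop W i (f t)))
                (fun _ _ => zero_le) (Finset.mem_univ j))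
          · exact (eLpNorm_top_restrict_le_iSup hv).trans (iSup_nnnorm_ziter_le_LinfN Ω ht g hB)
      _ ≤ _ := le_self_add
  · calc _ ≤ eLpNorm u ∞ (volume.restrict Ω) * eLpNorm v 2 (volume.restrict Ω) := by
          simpa using eLpNorm_le_eLpNorm_top_mul_eLpNorm 2 u hv.aestronglyMeasurable (· * ·) 1
            (.of_forall hmul)
      _ ≤ (∑ j : Fin M, LinfN Ω W ((k - 1) / 2) t fun s => Zop W j (f s))
            * HcoN Ω W (k - 1) (g t) := by
          gcongr
          · exact (eLpNorm_top_restrict_le_iSup hu).trans <|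
              (iSup_nnnorm_ziter_le_LinfN Ω ht (fun s => Zop W j (f s)) (by omega)).trans
              (Finset.single_le_sum (f := fun i => LinfN Ω W ((k - 1) / 2) t fun s => Zop W i (f s))
                (fun _ _ => zero_le) (Finset.mem_univ j))
          · exact eLpNorm_ziter_le_HcoN Ω _ (by omega)
      _ ≤ _ := by rw [mul_comm]; exact le_add_self

end Conormal

theorem conormal_commutator_estimate_general (M k : ℕ) :
    ∃ C : ℝ≥0∞, 0 < C ∧ C < ⊤ ∧
      ∀ (Ω : Set E) (W : Fin M → E → E), (∀ j, ContDiff ℝ ∞ (W j)) →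
        ∀ (f g : ℝ → E → ℝ), (∀ s, ContDiff ℝ ∞ (f s)) → (∀ s, ContDiff ℝ ∞ (g s)) →
          ∀ t : ℝ, 0 ≤ t → ∀ I : Fin k → Fin M,
            eLpNorm
                (fun x => ZIter W (List.ofFn I) (fun y => f t y * g t y) x
                  - f t x * ZIter W (List.ofFn I) (g t) x) 2 (volume.restrict Ω)
              ≤ C * ((∑ j : Fin M, HcoN Ω W (k - 1) (Zop W j (f t)))
                        * LinfN Ω W (k / 2 - 1) t g
                     + HcoN Ω W (k - 1) (g t)
                        * ∑ j : Fin M, LinfN Ω W ((k - 1) / 2) t fun s => Zop W j (f s)) := by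
  refine ⟨2 ^ k, by positivity, ENNReal.pow_lt_top ENNReal.ofNat_lt_top, ?_⟩
  intro Ω W hW f g hf hg t ht I
  set L := List.ofFn I
  set term := fun (p : List (Fin M) × List (Fin M)) x => ZIter W p.1 (f t) x * ZIter W p.2 (g t) x
  have hcomm : (fun x => ZIter W L (fun y => f t y * g t y) x - f t x * ZIter W L (g t) x)
      = fun x => ((leibnizSplits L).map fun p => term p x).sum :=
    funext fun x => by rw [ziter_mul hW (hf t) (hg t)]; ring
  set S := (∑ j : Fin M, HcoN Ω W (k - 1) (Zop W j (f t))) * LinfN Ω W (k / 2 - 1) t g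
    + HcoN Ω W (k - 1) (g t) * ∑ j : Fin M, LinfN Ω W ((k - 1) / 2) t fun s => Zop W j (f s)
  have hterm : ∀ p ∈ leibnizSplits L, eLpNorm (term p) 2 (volume.restrict Ω) ≤ S := fun p hp =>
    have ⟨hne, hlen⟩ := ne_nil_and_length_add_of_mem_leibnizSplits hp
    eLpNorm_ziter_mul_ziter_le Ω hW (hf t) (hg t) ht hne (hlen.trans List.length_ofFn)
  have hcount : ((leibnizSplits L).length : ℝ≥0∞) ≤ 2 ^ k := by
    have := length_leibnizSplits L
    rw [List.length_ofFn] at this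
    exact_mod_cast (Nat.le_succ _).trans this.le
  rw [hcomm]
  calc _ ≤ ((leibnizSplits L).map fun p => eLpNorm (term p) 2 (volume.restrict Ω)).sum :=
        eLpNorm_list_sum_le one_le_two _ _ fun p _ =>
          ((contDiff_ziter hW (hf t) p.1).continuous.mul
            (contDiff_ziter hW (hg t) p.2).continuous).aestronglyMeasurable
    _ ≤ (leibnizSplits L).length * S := by
        simpa only [List.length_map, nsmul_eq_mul] using
          List.sum_le_card_nsmul _ _ (List.forall_mem_map.mpr hterm)
    _ ≤ 2 ^ k * S := by gcongr

/-- Commutator estimate in conormal Sobolev spaces: for `|I| = k ≥ 2`,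
`‖[Z^I, f] g(t)‖_{L²} ≲ ‖Z f(t)‖_{H^{k−1}_co} |||g|||_{[k/2]−1,∞,t}
  + ‖g(t)‖_{H^{k−1}_co} |||Z f|||_{[(k−1)/2],∞,t}`,
where `[Z^I, f] g = Z^I(fg) − f Z^I g` and `Z f` denotes the collection of first
conormal derivatives of `f`. -/
theorem conormal_commutator_estimate (M k : ℕ) (hk : 2 ≤ k) :
    ∃ C : ℝ≥0∞, 0 < C ∧ C < ⊤ ∧
      ∀ (Ω : Set E) (W : Fin M → E → E), (∀ j, ContDiff ℝ ∞ (W j)) →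
        ∀ (f g : ℝ → E → ℝ), (∀ s, ContDiff ℝ ∞ (f s)) → (∀ s, ContDiff ℝ ∞ (g s)) →
          ∀ t : ℝ, 0 ≤ t → ∀ I : Fin k → Fin M,
            eLpNorm
                (fun x => ZIter W (List.ofFn I) (fun y => f t y * g t y) x
                  - f t x * ZIter W (List.ofFn I) (g t) x) 2 (volume.restrict Ω)
              ≤ C * ((∑ j : Fin M, HcoN Ω W (k - 1) (Zop W j (f t)))
                        * LinfN Ω W (k / 2 - 1) t g
                     + HcoN Ω W (k - 1) (g t)
                        * ∑ j : Fin M, LinfN Ω W ((k - 1) / 2) t fun s => Zop W j (f s)) :=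
  conormal_commutator_estimate_general M k
end
end

section
/- Green's function derivative bound: with Y = Y(t,t') satisfying νλc₀(t−t') ≤ Y ≤ νλ(t−t')/c₀ for 0 ≤ t' < t and K_±(t,t',z,z') = (4πY)^{−1/2} e^{−|z±z'|²/(4Y)}, one has sup over z of ‖ν^{1/2} ∂_z(K₋ − K₊)(t,t',·,z')‖_{L¹_{z'}(ℝ₊)} ≲ C(1/c₀)(t−t')^{−1/2}. -/
/-!
Writing `G(u) = exp (-u² / b)` with `b = 4Y`, the kernel difference is
`(4πY)^{-1/2} (G(z - z') - G(z + z'))`, so its `z`-derivative is bounded in `L¹_{z'}(0, ∞)` by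
`(4πY)^{-1/2}` times twice `‖G'‖_{L¹(ℝ)} = 2 G(0) = 2`. Since `Y ≥ νλc₀(t - t')`, the factor
`ν^{1/2} (4πY)^{-1/2}` is at most `(4πλc₀)^{-1/2} (t - t')^{-1/2}`.
-/

open MeasureTheory Set Filter Real

lemma integral_Ioi_mul_exp_neg_mul_sq {a : ℝ} (ha : 0 < a) :
    ∫ x in Ioi (0 : ℝ), x * exp (-a * x ^ 2) = (2 * a)⁻¹ := by
  have h := integral_mul_cexp_neg_mul_sq (b := (a : ℂ)) (by simpa using ha)
  rw [← Complex.ofReal_inj]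
  push_cast
  rw [← h, ← integral_complex_ofReal]
  push_cast
  rfl

lemma integral_abs_mul_exp_neg_mul_sq {a : ℝ} (ha : 0 < a) :
    ∫ x, |x * exp (-a * x ^ 2)| = a⁻¹ := by
  have h : (fun x : ℝ => |x * exp (-a * x ^ 2)|) = fun x => |x| * exp (-a * |x| ^ 2) := by
    ext x; rw [abs_mul, abs_of_pos (exp_pos _), sq_abs]
  rw [h, integral_comp_abs (f := fun x => x * exp (-a * x ^ 2)),
    integral_Ioi_mul_exp_neg_mul_sq ha]
  field_simp

lemma hasDerivAt_exp_neg_sq_div (b u : ℝ) :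
    HasDerivAt (fun u => exp (-u ^ 2 / b)) (-(2 * u / b) * exp (-u ^ 2 / b)) u := by
  have h : HasDerivAt (fun u : ℝ => -u ^ 2 / b) (-(2 * u / b)) u := by
    simpa [neg_div] using ((hasDerivAt_pow 2 u).neg).div_const b
  simpa [mul_comm] using h.exp

lemma abs_deriv_exp_neg_sq_div {b : ℝ} (hb : 0 < b) (u : ℝ) :
    |deriv (fun u => exp (-u ^ 2 / b)) u| = 2 / b * |u * exp (-b⁻¹ * u ^ 2)| := by
  have harg : -u ^ 2 / b = -b⁻¹ * u ^ 2 := by ring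
  rw [(hasDerivAt_exp_neg_sq_div b u).deriv, harg, abs_mul, abs_mul, abs_neg, abs_div,
    abs_mul, abs_two, abs_of_pos hb]
  ring

lemma integrable_abs_deriv_exp_neg_sq_div {b : ℝ} (hb : 0 < b) :
    Integrable fun u => |deriv (fun u => exp (-u ^ 2 / b)) u| := by
  simp_rw [abs_deriv_exp_neg_sq_div hb]
  exact (integrable_mul_exp_neg_mul_sq (inv_pos.mpr hb)).abs.const_mul _

lemma integral_abs_deriv_exp_neg_sq_div {b : ℝ} (hb : 0 < b) :
    ∫ u, |deriv (fun u => exp (-u ^ 2 / b)) u| = 2 := by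
  simp_rw [abs_deriv_exp_neg_sq_div hb]
  rw [integral_const_mul, integral_abs_mul_exp_neg_mul_sq (inv_pos.mpr hb)]
  field_simp

lemma deriv_exp_neg_sq_div_sub_exp_neg_sq_div (b c z z' : ℝ) :
    deriv (fun w => c * exp (-(|w - z'| ^ 2) / b) - c * exp (-(|w + z'| ^ 2) / b)) z
      = c * (deriv (fun u => exp (-u ^ 2 / b)) (z - z')
          - deriv (fun u => exp (-u ^ 2 / b)) (z + z')) := by
  simp_rw [sq_abs]
  have hG : ∀ u,
      HasDerivAt (fun u => exp (-u ^ 2 / b)) (deriv (fun u => exp (-u ^ 2 / b)) u) u := fun u =>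
    (hasDerivAt_exp_neg_sq_div b u).differentiableAt.hasDerivAt
  rw [mul_sub]
  exact ((((hG _).comp_sub_const z z').const_mul c).sub
    (((hG _).comp_add_const z z').const_mul c)).deriv

lemma setIntegral_Ioi_abs_deriv_image_kernel_le {b : ℝ} (hb : 0 < b) (c z : ℝ) :
    ∫ z' in Ioi (0 : ℝ),
        |deriv (fun w => c * exp (-(|w - z'| ^ 2) / b) - c * exp (-(|w + z'| ^ 2) / b)) z|
      ≤ 4 * |c| := by
  set G' := deriv (fun u => exp (-u ^ 2 / b))
  have hsub : Integrable fun z' => |G' (z - z')| :=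
    (integrable_abs_deriv_exp_neg_sq_div hb).comp_sub_left z
  have hadd : Integrable fun z' => |G' (z + z')| :=
    (integrable_abs_deriv_exp_neg_sq_div hb).comp_add_left z
  have hdom : Integrable fun z' => |c| * (|G' (z - z')| + |G' (z + z')|) :=
    (hsub.add hadd).const_mul _
  calc ∫ z' in Ioi (0 : ℝ),
        |deriv (fun w => c * exp (-(|w - z'| ^ 2) / b) - c * exp (-(|w + z'| ^ 2) / b)) z|
      ≤ ∫ z' in Ioi (0 : ℝ), |c| * (|G' (z - z')| + |G' (z + z')|) := by
        refine integral_mono_of_nonneg (Eventually.of_forall fun _ => abs_nonneg _)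
          hdom.integrableOn (Eventually.of_forall fun z' => ?_)
        simp only [deriv_exp_neg_sq_div_sub_exp_neg_sq_div, abs_mul]
        gcongr
        exact abs_sub _ _
    _ ≤ ∫ z', |c| * (|G' (z - z')| + |G' (z + z')|) :=
        setIntegral_le_integral hdom (Eventually.of_forall fun _ => by positivity)
    _ = 4 * |c| := by
        rw [integral_const_mul, integral_add hsub hadd,
          integral_sub_left_eq_self (fun u => |G' u|), integral_add_left_eq_self (fun u => |G' u|),
          integral_abs_deriv_exp_neg_sq_div hb]
        ring

lemma sqrt_mul_inv_sqrt_four_pi_le {ν κ s Y : ℝ} (hν : 0 < ν) (hκ : 0 < κ) (hs : 0 < s)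
    (hY : ν * κ * s ≤ Y) :
    √ν * (√(4 * π * Y))⁻¹ ≤ (√(4 * π * κ))⁻¹ / √s := by
  have hY0 : 0 < Y := lt_of_lt_of_le (by positivity) hY
  rw [← div_eq_mul_inv, inv_div_left, ← sqrt_div' _ (by positivity), ← sqrt_mul hs.le,
    ← sqrt_inv]
  gcongr
  calc ν / (4 * π * Y) ≤ ν / (4 * π * (ν * κ * s)) := by gcongr
    _ = (s * (4 * π * κ))⁻¹ := by field_simp

/-- Green's function derivative bound: with `Y = Y(t,t')` satisfying
`νλc₀(t−t') ≤ Y ≤ νλ(t−t')/c₀` and `K_± = (4πY)^{−1/2} e^{−|z±z'|²/(4Y)}`, one has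
`sup_z ‖ν^{1/2} ∂_z (K₋ − K₊)(·, z')‖_{L¹_{z'}(ℝ₊)} ≤ C(1/c₀) (t−t')^{−1/2}`,
uniformly in `ν`. -/
theorem heat_kernel_derivative_L1_bound (c₀ lam : ℝ) (hc₀ : 0 < c₀) (hlam : 0 < lam) :
    ∃ C : ℝ, 0 < C ∧
      ∀ ν t t' Y : ℝ, 0 < ν → 0 ≤ t' → t' < t →
        ν * lam * c₀ * (t - t') ≤ Y → Y ≤ ν * lam * (t - t') / c₀ →
        ∀ z : ℝ, 0 ≤ z →
          (∫ z' in Set.Ioi (0:ℝ),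
              |Real.sqrt ν *
                deriv (fun w =>
                  (Real.sqrt (4 * Real.pi * Y))⁻¹ * Real.exp (-(|w - z'| ^ 2) / (4 * Y))
                    - (Real.sqrt (4 * Real.pi * Y))⁻¹
                        * Real.exp (-(|w + z'| ^ 2) / (4 * Y))) z|)
            ≤ C / Real.sqrt (t - t') := by
  refine ⟨4 / √(4 * π * (lam * c₀)), by positivity, ?_⟩
  intro ν t t' Y hν _ htt' hY _ z _
  have hs : 0 < t - t' := sub_pos.mpr htt'
  have hY' : ν * (lam * c₀) * (t - t') ≤ Y := by linarith
  have hY0 : 0 < Y := lt_of_lt_of_le (by positivity) hY'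
  calc _ = √ν * ∫ z' in Ioi (0 : ℝ), |deriv (fun w =>
              (√(4 * π * Y))⁻¹ * exp (-(|w - z'| ^ 2) / (4 * Y))
                - (√(4 * π * Y))⁻¹ * exp (-(|w + z'| ^ 2) / (4 * Y))) z| := by
        simp_rw [abs_mul, abs_of_nonneg (sqrt_nonneg ν)]
        exact integral_const_mul _ _
    _ ≤ √ν * (4 * |(√(4 * π * Y))⁻¹|) := by
        gcongr
        exact setIntegral_Ioi_abs_deriv_image_kernel_le (by positivity) _ z
    _ = 4 * (√ν * (√(4 * π * Y))⁻¹) := by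
        rw [abs_of_nonneg (by positivity)]
        ring
    _ ≤ 4 * ((√(4 * π * (lam * c₀)))⁻¹ / √(t - t')) := by
        gcongr
        exact sqrt_mul_inv_sqrt_four_pi_le hν (by positivity) hs hY'
    _ = 4 / √(4 * π * (lam * c₀)) / √(t - t') := by ring
end

section
/- Iterated scaling-field action on the heat kernel: for each integer k ≥ 0 there exist polynomials P_{2j} of degree 2j (0 ≤ j ≤ k) such that (z∂_z)^k [(4πY)^{−1/2}(e^{−|z−z'|²/(4Y)} − e^{−|z+z'|²/(4Y)})] = (4πY)^{−1/2} Σ_{j=0}^k (z'∂_{z'})^j [P_{2(k−j)}((z−z')/√Y) e^{−|z−z'|²/(4Y)} − P_{2(k−j)}((z+z')/√Y) e^{−|z+z'|²/(4Y)}], where Y > 0 is independent of z, z'. -/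
noncomputable section

/-- The scaling vector field `z ∂_z` acting on functions of one real variable. -/
def SD (g : ℝ → ℝ) : ℝ → ℝ := fun z => z * deriv g z

/-!
With `u = (z ∓ z')/√Y` and `s = z/√Y`, both `z∂_z` and `z'∂_{z'}` send a difference
`B(u₋, s) e^{-u₋²/4} - B(u₊, s) e^{-u₊²/4}` to another difference of the same shape, acting on
the polynomial `B` by differential operators `Z = scalingZ` and `Z' = scalingZ'`; both images
give the same operators because `z' ∂_{z'} u = u - s` for `u = u₋` and `u = u₊` alike. `Z` and
`Z'` commute, and `A = Z + Z'` acts on polynomials in `u` alone as `gaussEuler`,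
`Q ↦ u Q' - u² Q / 2`, which raises the degree by exactly two. Hence
`Z^k = (A - Z')^k = ∑ⱼ C(k,j) (-Z')^j A^(k-j)`, and applying this to `B = 1` gives the claim
with `P_j = (-1)^j C(k,j) A^(k-j) 1`.
-/

namespace MvPolynomial

theorem pderiv_comm {R σ : Type*} [CommSemiring R] (i j : σ) (p : MvPolynomial σ R) :
    pderiv i (pderiv j p) = pderiv j (pderiv i p) := by
  classical
  induction p using MvPolynomial.induction_on with
  | C a => simp
  | add p q hp hq => simp [hp, hq]
  | mul_X p n hp =>
    simp only [Derivation.leibniz, pderiv_X, map_add, smul_eq_mul, hp]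
    simp only [Pi.single_apply]
    split_ifs <;> simp <;> ring

theorem hasDerivAt_eval {𝕜 σ : Type*} [NontriviallyNormedField 𝕜] [Fintype σ]
    (p : MvPolynomial σ 𝕜) {v : 𝕜 → σ → 𝕜} {v' : σ → 𝕜} {t : 𝕜}
    (hv : ∀ i, HasDerivAt (fun x => v x i) (v' i) t) :
    HasDerivAt (fun x => eval (v x) p) (∑ i, eval (v t) (pderiv i p) * v' i) t := by
  classical
  induction p using MvPolynomial.induction_on with
  | C a => simpa using hasDerivAt_const t a
  | add p q hp hq => simpa [add_mul, Finset.sum_add_distrib] using hp.fun_add hq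
  | mul_X p n hp =>
    have h := hp.fun_mul (hv n)
    simp only [map_mul, eval_X]
    refine h.congr_deriv ?_
    simp only [Finset.sum_mul, Derivation.leibniz, pderiv_X, Pi.single_apply, apply_ite,
      smul_eq_mul, mul_one, mul_zero, map_add, map_zero, map_mul, eval_X, add_mul, ite_mul,
      zero_mul, Finset.sum_add_distrib, Finset.sum_ite_eq, Finset.mem_univ, ↓reduceIte]
    rw [add_comm]
    exact congrArg _ (Finset.sum_congr rfl fun _ _ => by ring)

theorem eval_aeval_X {R σ : Type*} [CommSemiring R] (v : σ → R) (i : σ) (Q : Polynomial R) :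
    eval v (Polynomial.aeval (X i) Q) = Q.eval (v i) := by
  change aeval v _ = _
  rw [← Polynomial.aeval_algHom_apply, aeval_X, Polynomial.coe_aeval_eq_eval]

end MvPolynomial

section GaussEuler

open Polynomial

/-- `e^{u²/4} (u ∂_u) e^{-u²/4}` on polynomials in `u`. -/
def gaussEuler (Q : ℝ[X]) : ℝ[X] := X * derivative Q - C (1 / 2) * X ^ 2 * Q

theorem natDegree_gaussEuler_le (Q : ℝ[X]) : (gaussEuler Q).natDegree ≤ Q.natDegree + 2 := by
  unfold gaussEuler
  compute_degree
  have := natDegree_derivative_le Q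
  omega

theorem coeff_gaussEuler_natDegree_add_two (Q : ℝ[X]) :
    (gaussEuler Q).coeff (Q.natDegree + 2) = -(1 / 2) * Q.leadingCoeff := by
  have hder : (X * derivative Q).coeff (Q.natDegree + 2) = 0 := by
    rw [coeff_X_mul, coeff_derivative, coeff_eq_zero_of_natDegree_lt (by omega), zero_mul]
  rw [gaussEuler, coeff_sub, hder, mul_assoc, coeff_C_mul, coeff_X_pow_mul, leadingCoeff]
  ring

theorem gaussEuler_ne_zero {Q : ℝ[X]} (hQ : Q ≠ 0) : gaussEuler Q ≠ 0 := by
  intro h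
  simpa [h, hQ] using coeff_gaussEuler_natDegree_add_two Q

theorem natDegree_gaussEuler {Q : ℝ[X]} (hQ : Q ≠ 0) :
    (gaussEuler Q).natDegree = Q.natDegree + 2 :=
  natDegree_eq_of_le_of_coeff_ne_zero (natDegree_gaussEuler_le Q)
    (by simp [coeff_gaussEuler_natDegree_add_two, hQ])

theorem gaussEuler_iterate_ne_zero {Q : ℝ[X]} (hQ : Q ≠ 0) (m : ℕ) : gaussEuler^[m] Q ≠ 0 := by
  induction m with
  | zero => exact hQ
  | succ m ih => rw [Function.iterate_succ_apply']; exact gaussEuler_ne_zero ih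

theorem natDegree_gaussEuler_iterate {Q : ℝ[X]} (hQ : Q ≠ 0) (m : ℕ) :
    (gaussEuler^[m] Q).natDegree = Q.natDegree + 2 * m := by
  induction m with
  | zero => rfl
  | succ m ih =>
    rw [Function.iterate_succ_apply', natDegree_gaussEuler (gaussEuler_iterate_ne_zero hQ m), ih]
    ring

end GaussEuler

open MvPolynomial

/-- `e^{u²/4} ∂_u e^{-u²/4}`, acting on polynomials `B(u, s)`. -/
def gaussDerivU : MvPolynomial (Fin 2) ℝ →ₗ[ℝ] MvPolynomial (Fin 2) ℝ :=
  (pderiv 0).toLinearMap - LinearMap.mulLeft ℝ (C (1 / 2) * X 0)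

def scalingZ' : Module.End ℝ (MvPolynomial (Fin 2) ℝ) :=
  LinearMap.mulLeft ℝ (X 0 - X 1) ∘ₗ gaussDerivU

def scalingZ : Module.End ℝ (MvPolynomial (Fin 2) ℝ) :=
  LinearMap.mulLeft ℝ (X 1) ∘ₗ (gaussDerivU + (pderiv 1).toLinearMap)

theorem gaussDerivU_apply (B : MvPolynomial (Fin 2) ℝ) :
    gaussDerivU B = pderiv 0 B - C (1 / 2) * X 0 * B := rfl

theorem scalingZ'_apply (B : MvPolynomial (Fin 2) ℝ) :
    scalingZ' B = (X 0 - X 1) * gaussDerivU B := rfl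

theorem scalingZ_apply (B : MvPolynomial (Fin 2) ℝ) :
    scalingZ B = X 1 * (gaussDerivU B + pderiv 1 B) := rfl

theorem commute_scalingZ_scalingZ' : Commute scalingZ scalingZ' := by
  refine LinearMap.ext fun B => ?_
  have h01 : pderiv 0 (X 1 : MvPolynomial (Fin 2) ℝ) = 0 := pderiv_X_of_ne (by decide)
  have h10 : pderiv 1 (X 0 : MvPolynomial (Fin 2) ℝ) = 0 := pderiv_X_of_ne (by decide)
  simp only [Module.End.mul_apply, scalingZ_apply, scalingZ'_apply, gaussDerivU_apply,
    Derivation.leibniz, map_add, map_sub, pderiv_X_self, pderiv_C, h01, h10, smul_eq_mul,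
    mul_one, mul_zero, add_zero]
  rw [pderiv_comm (1 : Fin 2) 0 B]
  ring

theorem pderiv_one_aeval_X_zero (Q : Polynomial ℝ) :
    pderiv 1 (Polynomial.aeval (X 0 : MvPolynomial (Fin 2) ℝ) Q) = 0 := by
  simp [Derivation.map_aeval, pderiv_X_of_ne (show (0 : Fin 2) ≠ 1 by decide)]

theorem scalingZ_add_scalingZ'_aeval (Q : Polynomial ℝ) :
    (scalingZ + scalingZ') (Polynomial.aeval (X 0 : MvPolynomial (Fin 2) ℝ) Q)
      = Polynomial.aeval (X 0) (gaussEuler Q) := by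
  simp only [LinearMap.add_apply, scalingZ_apply, scalingZ'_apply, pderiv_one_aeval_X_zero]
  simp only [gaussDerivU_apply, Derivation.map_aeval, pderiv_X_self, smul_eq_mul, mul_one,
    add_zero, gaussEuler, Polynomial.aeval_sub, map_mul, Polynomial.aeval_X, Polynomial.aeval_C,
    algebraMap_eq, map_pow]
  ring

theorem scalingZ_add_scalingZ'_pow_aeval (m : ℕ) (Q : Polynomial ℝ) :
    ((scalingZ + scalingZ') ^ m) (Polynomial.aeval (X 0 : MvPolynomial (Fin 2) ℝ) Q)
      = Polynomial.aeval (X 0) (gaussEuler^[m] Q) := by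
  induction m generalizing Q with
  | zero => rfl
  | succ m ih => rw [pow_succ, Module.End.mul_apply, scalingZ_add_scalingZ'_aeval, ih,
      Function.iterate_succ_apply]

theorem scalingZ_pow_aeval (k : ℕ) (Q : Polynomial ℝ) :
    (scalingZ ^ k) (Polynomial.aeval (X 0 : MvPolynomial (Fin 2) ℝ) Q)
      = ∑ j ∈ Finset.range (k + 1), (scalingZ' ^ j) (Polynomial.aeval (X 0)
          (((-1) ^ j * k.choose j : ℝ) • gaussEuler^[k - j] Q)) := by
  have hcomm : Commute (-scalingZ') (scalingZ + scalingZ') :=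
    (Commute.add_right (commute_scalingZ_scalingZ'.symm) (Commute.refl _)).neg_left
  rw [show scalingZ = -scalingZ' + (scalingZ + scalingZ') by abel, hcomm.add_pow,
    LinearMap.sum_apply]
  refine Finset.sum_congr rfl fun j _ => ?_
  rw [Module.End.mul_apply, Module.End.mul_apply, Module.End.natCast_apply, map_nsmul,
    scalingZ_add_scalingZ'_pow_aeval, ← neg_one_smul ℝ scalingZ', smul_pow, LinearMap.smul_apply,
    ← Nat.cast_smul_eq_nsmul ℝ]
  simp only [mul_smul, map_smul]

def gaussTerm (B : MvPolynomial (Fin 2) ℝ) (u s : ℝ) : ℝ := eval ![u, s] B * Real.exp (-u ^ 2 / 4)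

theorem hasDerivAt_gaussTerm (B : MvPolynomial (Fin 2) ℝ) {u s : ℝ → ℝ} {u' s' t : ℝ}
    (hu : HasDerivAt u u' t) (hs : HasDerivAt s s' t) :
    HasDerivAt (fun x => gaussTerm B (u x) (s x))
      (gaussTerm (gaussDerivU B) (u t) (s t) * u' + gaussTerm (pderiv 1 B) (u t) (s t) * s') t := by
  have hB := hasDerivAt_eval B (v := fun x => ![u x, s x]) (v' := ![u', s'])
    (fun i => by fin_cases i <;> simpa)
  have hE := ((hu.fun_pow 2).fun_neg.div_const 4).exp
  refine (hB.fun_mul hE).congr_deriv ?_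
  simp only [gaussTerm, gaussDerivU_apply, Fin.sum_univ_two, map_sub, map_mul, eval_C, eval_X,
    Matrix.cons_val_zero, Matrix.cons_val_one, Matrix.cons_val_fin_one]
  ring

theorem gaussTerm_mul (p B : MvPolynomial (Fin 2) ℝ) (u s : ℝ) :
    gaussTerm (p * B) u s = eval ![u, s] p * gaussTerm B u s := by
  rw [gaussTerm, gaussTerm, map_mul, mul_assoc]

theorem gaussTerm_add (B C : MvPolynomial (Fin 2) ℝ) (u s : ℝ) :
    gaussTerm (B + C) u s = gaussTerm B u s + gaussTerm C u s := by
  rw [gaussTerm, gaussTerm, gaussTerm, map_add, add_mul]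

def imageKernel (B : MvPolynomial (Fin 2) ℝ) (Y z z' : ℝ) : ℝ :=
  gaussTerm B ((z - z') / √Y) (z / √Y) - gaussTerm B ((z + z') / √Y) (z / √Y)

theorem SD_imageKernel_right (B : MvPolynomial (Fin 2) ℝ) {Y : ℝ} (hY : 0 < Y) (z : ℝ) :
    SD (imageKernel B Y z) = imageKernel (scalingZ' B) Y z := by
  funext z'
  have hminus := hasDerivAt_gaussTerm B (((hasDerivAt_id' z').const_sub z).div_const √Y)
    (hasDerivAt_const z' (z / √Y))
  have hplus := hasDerivAt_gaussTerm B (((hasDerivAt_id' z').const_add z).div_const √Y)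
    (hasDerivAt_const z' (z / √Y))
  have hsqrt : √Y ≠ 0 := (Real.sqrt_pos.2 hY).ne'
  have hK : HasDerivAt (imageKernel B Y z) _ z' := hminus.fun_sub hplus
  rw [SD, hK.deriv]
  simp only [imageKernel, scalingZ'_apply, gaussTerm_mul, map_sub, eval_X, Matrix.cons_val_zero,
    Matrix.cons_val_one, Matrix.cons_val_fin_one, mul_zero, add_zero]
  field_simp
  ring

theorem SD_imageKernel_left (B : MvPolynomial (Fin 2) ℝ) {Y : ℝ} (hY : 0 < Y) (z' : ℝ) :
    SD (fun z => imageKernel B Y z z') = fun z => imageKernel (scalingZ B) Y z z' := by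
  funext z
  have hminus := hasDerivAt_gaussTerm B (((hasDerivAt_id' z).sub_const z').div_const √Y)
    ((hasDerivAt_id' z).div_const √Y)
  have hplus := hasDerivAt_gaussTerm B (((hasDerivAt_id' z).add_const z').div_const √Y)
    ((hasDerivAt_id' z).div_const √Y)
  have hsqrt : √Y ≠ 0 := (Real.sqrt_pos.2 hY).ne'
  have hK : HasDerivAt (fun z => imageKernel B Y z z') _ z := hminus.fun_sub hplus
  rw [SD, hK.deriv]
  simp only [imageKernel, scalingZ_apply, gaussTerm_mul, gaussTerm_add, eval_X,
    Matrix.cons_val_one, Matrix.cons_val_fin_one]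
  field_simp

theorem imageKernel_sum {ι : Type*} (s : Finset ι) (B : ι → MvPolynomial (Fin 2) ℝ)
    (Y z z' : ℝ) :
    imageKernel (∑ i ∈ s, B i) Y z z' = ∑ i ∈ s, imageKernel (B i) Y z z' := by
  simp only [imageKernel, gaussTerm, map_sum, Finset.sum_mul, Finset.sum_sub_distrib]

theorem imageKernel_aeval {Y : ℝ} (hY : 0 ≤ Y) (Q : Polynomial ℝ) (z : ℝ) :
    imageKernel (Polynomial.aeval (X 0) Q) Y z = fun z' =>
      Q.eval ((z - z') / √Y) * Real.exp (-(z - z') ^ 2 / (4 * Y))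
        - Q.eval ((z + z') / √Y) * Real.exp (-(z + z') ^ 2 / (4 * Y)) := by
  funext z'
  have hexp (a : ℝ) : -(a / √Y) ^ 2 / 4 = -a ^ 2 / (4 * Y) := by
    rw [div_pow, Real.sq_sqrt hY]
    ring
  simp only [imageKernel, gaussTerm, eval_aeval_X, Matrix.cons_val_zero, hexp]

theorem iterate_SD_imageKernel_right (B : MvPolynomial (Fin 2) ℝ) {Y : ℝ} (hY : 0 < Y) (z : ℝ)
    (j : ℕ) : SD^[j] (imageKernel B Y z) = imageKernel ((scalingZ' ^ j) B) Y z := by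
  rw [Module.End.pow_apply]
  exact (Function.Semiconj.iterate_right (f := fun B => imageKernel B Y z)
    (fun B => (SD_imageKernel_right B hY z).symm) j B).symm

theorem iterate_SD_imageKernel_left (B : MvPolynomial (Fin 2) ℝ) {Y : ℝ} (hY : 0 < Y) (z' : ℝ)
    (k : ℕ) :
    SD^[k] (fun z => imageKernel B Y z z') = fun z => imageKernel ((scalingZ ^ k) B) Y z z' := by
  rw [Module.End.pow_apply]
  exact (Function.Semiconj.iterate_right (f := fun B z => imageKernel B Y z z')
    (fun B => (SD_imageKernel_left B hY z').symm) k B).symm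

theorem SD_const_mul (c : ℝ) (f : ℝ → ℝ) : SD (fun x => c * f x) = fun x => c * SD f x := by
  funext x
  simp only [SD, deriv_const_mul_field']
  ring

theorem iterate_SD_const_mul (c : ℝ) (f : ℝ → ℝ) (k : ℕ) :
    SD^[k] (fun x => c * f x) = fun x => c * SD^[k] f x :=
  (Function.Semiconj.iterate_right (f := fun f x => c * f x)
    (fun f => (SD_const_mul c f).symm) k f).symm

/-- Iterated scaling-field action on the half-line heat kernel: for each `k` there are
polynomials `P_j` of degree `2(k−j)` (`0 ≤ j ≤ k`) such that
`(z∂_z)^k [(4πY)^{−1/2}(e^{−(z−z')²/4Y} − e^{−(z+z')²/4Y})]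
 = (4πY)^{−1/2} Σ_{j=0}^k (z'∂_{z'})^j [P_j((z−z')/√Y) e^{−(z−z')²/4Y}
    − P_j((z+z')/√Y) e^{−(z+z')²/4Y}]`. -/
theorem scaling_field_heat_kernel_structure (k : ℕ) :
    ∃ P : ℕ → Polynomial ℝ,
      (∀ j ≤ k, P j ≠ 0 ∧ (P j).natDegree = 2 * (k - j)) ∧
      ∀ Y : ℝ, 0 < Y → ∀ z z' : ℝ, 0 < z → 0 < z' →
        SD^[k] (fun w =>
            (Real.sqrt (4 * Real.pi * Y))⁻¹
              * (Real.exp (-(w - z') ^ 2 / (4 * Y)) - Real.exp (-(w + z') ^ 2 / (4 * Y)))) z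
          = (Real.sqrt (4 * Real.pi * Y))⁻¹
              * ∑ j ∈ Finset.range (k + 1),
                  SD^[j] (fun w =>
                    (P j).eval ((z - w) / Real.sqrt Y) * Real.exp (-(z - w) ^ 2 / (4 * Y))
                      - (P j).eval ((z + w) / Real.sqrt Y)
                          * Real.exp (-(z + w) ^ 2 / (4 * Y))) z' := by
  refine ⟨fun j => ((-1) ^ j * k.choose j : ℝ) • gaussEuler^[k - j] 1, fun j hj => ?_, ?_⟩
  · have hc : ((-1) ^ j * k.choose j : ℝ) ≠ 0 :=
      mul_ne_zero (pow_ne_zero _ (by norm_num)) (Nat.cast_ne_zero.2 (Nat.choose_pos hj).ne')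
    refine ⟨smul_ne_zero hc (gaussEuler_iterate_ne_zero one_ne_zero _), ?_⟩
    dsimp only
    rw [Polynomial.natDegree_smul _ hc, natDegree_gaussEuler_iterate one_ne_zero,
      Polynomial.natDegree_one, zero_add]
  · intro Y hY z z' _ _
    have hkernel : (fun w => (√(4 * Real.pi * Y))⁻¹
          * (Real.exp (-(w - z') ^ 2 / (4 * Y)) - Real.exp (-(w + z') ^ 2 / (4 * Y))))
        = fun w => (√(4 * Real.pi * Y))⁻¹
          * imageKernel (Polynomial.aeval (X 0) (1 : Polynomial ℝ)) Y w z' := by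
      simp only [imageKernel_aeval hY.le, Polynomial.eval_one, one_mul]
    rw [hkernel, iterate_SD_const_mul, iterate_SD_imageKernel_left _ hY, scalingZ_pow_aeval]
    beta_reduce
    rw [imageKernel_sum]
    refine congrArg _ (Finset.sum_congr rfl fun j _ => ?_)
    rw [← imageKernel_aeval hY.le, iterate_SD_imageKernel_right _ hY]
end
end
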